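/- arXiv:2508.12588 — 2 statements merged into one kernel-verified Lean document; each statement's English description precedes it below -/
import Mathlib

section
/- Let H be a finite group acting transitively on a finite set V, let M and D be subgroups with H = MD and D transitive on V, and fix w ∈ V. If the orbit of w under M ∩ D equals the orbit of w under M, then H_w = M_w D_w, where H_w, M_w, D_w denote the respective point stabilisers of w. -/
open Pointwise

/-- If `H = MD` acts transitively on `V`, `D` is transitive on `V`, and the orbit of `w`
under `M ∩ D` equals its orbit under `M`, then `H_w = M_w D_w`. -/
theorem stmt7 (H : Type*) [Group H] [Finite H] (V : Type*) [Finite V] [MulAction H V]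
    (htrans : ∀ u v : V, ∃ h : H, h • u = v)
    (M D : Subgroup H)
    (hMD : ∀ h : H, ∃ m ∈ M, ∃ d ∈ D, h = m * d)
    (hDtrans : ∀ u v : V, ∃ d ∈ D, d • u = v)
    (w : V)
    (horb : MulAction.orbit ↥(M ⊓ D) w = MulAction.orbit ↥M w) :
    (MulAction.stabilizer H w : Set H) =
      ((M ⊓ MulAction.stabilizer H w : Subgroup H) : Set H) *
        ((D ⊓ MulAction.stabilizer H w : Subgroup H) : Set H) := by
  ext h
  constructor
  · intro hh
    have hhw : h • w = w := hh
    obtain ⟨m, hm, d, hd, rfl⟩ := hMD h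
    -- m⁻¹ • w is in the M-orbit of w, hence in the (M ⊓ D)-orbit
    have h1 : m⁻¹ • w ∈ MulAction.orbit ↥M w :=
      ⟨⟨m⁻¹, inv_mem hm⟩, rfl⟩
    rw [← horb] at h1
    obtain ⟨⟨x, hx⟩, hxw⟩ := h1
    have hxw' : x • w = m⁻¹ • w := hxw
    rw [Subgroup.mem_inf] at hx
    obtain ⟨hxM, hxD⟩ := hx
    have hrw : m * d = (m * x) * (x⁻¹ * d) := by group
    rw [hrw]
    refine Set.mul_mem_mul ?_ ?_
    · refine SetLike.mem_coe.mpr (Subgroup.mem_inf.mpr ⟨mul_mem hm hxM, ?_⟩)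
      show (m * x) • w = w
      rw [mul_smul, hxw', smul_inv_smul]
    · refine SetLike.mem_coe.mpr (Subgroup.mem_inf.mpr ⟨mul_mem (inv_mem hxD) hd, ?_⟩)
      show (x⁻¹ * d) • w = w
      have hdw : d • w = x • w := by
        rw [hxw']
        have := hhw
        rw [mul_smul] at this
        rw [eq_inv_smul_iff]
        exact this
      rw [mul_smul, hdw, inv_smul_smul]
  · rintro ⟨m, ⟨hmM, hmS⟩, d, ⟨hdD, hdS⟩, rfl⟩
    exact mul_mem hmS hdS
end

section
/- Let L be a transitive permutation group on a finite set Ω admitting a nontrivial block B with pointwise stabiliser L_{(Ω∖B)} ≠ 1. Then for every constant C there exists a finite connected vertex-transitive pair (Λ, H) with H ≤ Aut(Λ), H transitive on VΛ, local action H_u^{Λ(u)} permutation isomorphic to L at every vertex u, |VΛ| > C, and |H_u| ≥ |L_{(Ω∖B)}|^{|VΛ|/k − 1}, where k = |B|. -/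
/-!
Take for `Λ` a connected component of the regular cover of the complete bipartite graph on two
copies of `Ω` with voltages in `(ℤ/n)^L`: its vertices are triples `(s, x, ε)` with
`s : L → ℤ/n`, `x ∈ Ω` and a side `ε`, and `(s, x, 0)` is joined to `(s + d(x, y), y, 1)`, where
`d(x, y) l = 1` if `l x` lies in the block of `y` and `0` otherwise. Translations of `s`, the maps
induced by pairs `(α, β) ∈ L × L` acting on the two sides, and a swap of the sides are
automorphisms acting on every neighbourhood by an element of `L`; they make `Λ`
vertex-transitive with local action `L`.

Since `d` only sees blocks, the `k` vertices `(s, x', ε)` with `x'` in the block of `x` form a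
fibre on which a conjugate of `L_{(Ω∖B)}` acts independently of all other fibres, while every
local action stays in `L`. Fixing the fibre of `u` gives `|L_{(Ω∖B)}| ^ (|VΛ|/k - 1)` elements
of `H_u`. A closed walk of length four has voltage `2` at `l = 1`, so for odd `n = 2C + 1` the
component has at least `n` vertices.
-/

/-- Two sets of permutations (e.g. permutation groups) are permutation isomorphic. -/
def IsPermIso {α β : Type*} (S : Set (Equiv.Perm α)) (T : Set (Equiv.Perm β)) : Prop :=
  ∃ e : α ≃ β, ∀ p : Equiv.Perm α, p ∈ S ↔ e.permCongr p ∈ T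

/-- The set of permutations of the neighbourhood `Λ(u)` induced by elements of the
stabiliser of `u` in `H` (acting as automorphisms of `Λ`): the local action of `H` at `u`. -/
def localSet {V : Type*} (Λ : SimpleGraph V) (H : Subgroup (Equiv.Perm V)) (u : V) :
    Set (Equiv.Perm ↥(Λ.neighborSet u)) :=
  { q | ∃ g ∈ H, (∀ p p' : V, Λ.Adj (g p) (g p') ↔ Λ.Adj p p') ∧ g u = u ∧
        ∀ x : ↥(Λ.neighborSet u), (q x : V) = g (x : V) }

open Equiv MulAction SimpleGraph

/-! ### Local automorphism groups -/

namespace SimpleGraph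

variable {V Ω : Type*}

def localAut (Γ : SimpleGraph V) (c : V → Ω) (L : Subgroup (Perm Ω)) : Subgroup (Perm V) where
  carrier := {g | (∀ a b, Γ.Adj (g a) (g b) ↔ Γ.Adj a b) ∧
    ∀ v, ∃ l ∈ L, ∀ w, Γ.Adj v w → c (g w) = l (c w)}
  one_mem' := ⟨fun _ _ => Iff.rfl, fun _ => ⟨1, L.one_mem, fun _ _ => rfl⟩⟩
  mul_mem' := by
    rintro g g' ⟨hg, hgL⟩ ⟨hg', hg'L⟩
    refine ⟨fun a b => (hg _ _).trans (hg' a b), fun v => ?_⟩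
    obtain ⟨l', hl', h'⟩ := hg'L v
    obtain ⟨l, hl, h⟩ := hgL (g' v)
    exact ⟨l * l', L.mul_mem hl hl', fun w hw =>
      (h _ ((hg' v w).2 hw)).trans (congrArg l (h' w hw))⟩
  inv_mem' := by
    rintro g ⟨hg, hgL⟩
    have hinv : ∀ a b, Γ.Adj (g⁻¹ a) (g⁻¹ b) ↔ Γ.Adj a b := fun a b => by
      simpa using (hg (g⁻¹ a) (g⁻¹ b)).symm
    refine ⟨hinv, fun v => ?_⟩
    obtain ⟨l, hl, h⟩ := hgL (g⁻¹ v)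
    refine ⟨l⁻¹, L.inv_mem hl, fun w hw => ?_⟩
    rw [Perm.eq_inv_iff_eq, ← h _ ((hinv v w).2 hw), Perm.coe_inv, apply_symm_apply]

variable {Γ : SimpleGraph V} {c : V → Ω} {L : Subgroup (Perm Ω)}

theorem ConnectedComponent.apply_mem_iff {C : Γ.ConnectedComponent} {g : Perm V}
    (hg : ∀ a b, Γ.Adj (g a) (g b) ↔ Γ.Adj a b) {v : V} (hv : v ∈ C) (hgv : g v ∈ C) (w : V) :
    g w ∈ C ↔ w ∈ C := by
  have hC : ∀ x, x ∈ C ↔ Γ.connectedComponentMk x = C := fun _ => Iff.rfl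
  rw [hC] at hv hgv
  calc g w ∈ C ↔ Γ.Reachable (g w) (g v) := by rw [hC, ← hgv, ConnectedComponent.eq]
    _ ↔ Γ.Reachable w v := Iso.reachable_iff (φ := ⟨g, hg _ _⟩)
    _ ↔ w ∈ C := by rw [hC, ← hv, ConnectedComponent.eq]

theorem ConnectedComponent.subtypePerm_mem_localAut {C : Γ.ConnectedComponent} {g : Perm V}
    (hg : g ∈ Γ.localAut c L) (hC : ∀ w, g w ∈ C ↔ w ∈ C) :
    g.subtypePerm hC ∈ C.toSimpleGraph.localAut (c ∘ (↑)) L := by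
  refine ⟨fun a b => hg.1 a b, fun v => ?_⟩
  obtain ⟨l, hl, h⟩ := hg.2 v
  exact ⟨l, hl, fun w hw => h w hw⟩

theorem ConnectedComponent.exists_mem_localAut_restrict {C : Γ.ConnectedComponent} {g : Perm V}
    (hg : g ∈ Γ.localAut c L) {v : V} (hv : v ∈ C) (hgv : g v ∈ C) :
    ∃ h ∈ C.toSimpleGraph.localAut (c ∘ (↑)) L, ∀ x : C, (h x : V) = g x :=
  ⟨_, C.subtypePerm_mem_localAut hg (C.apply_mem_iff hg.1 hv hgv), fun _ => rfl⟩

theorem isPermIso_localSet_localAut {u : V}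
    (hc : Function.Bijective ((Γ.neighborSet u).domRestrict c))
    (hL : ∀ l ∈ L, ∃ g ∈ Γ.localAut c L, g u = u ∧ ∀ w, Γ.Adj u w → c (g w) = l (c w)) :
    IsPermIso (localSet Γ (Γ.localAut c L) u) {p | p ∈ L} := by
  let e := Equiv.ofBijective _ hc
  have key : ∀ (q : Perm (Γ.neighborSet u)) (g : Perm V) (l : Perm Ω),
      (∀ x : Γ.neighborSet u, (q x : V) = g x) → (∀ w, Γ.Adj u w → c (g w) = l (c w)) →
      e.permCongr q = l := by
    intro q g l hq hl
    ext y
    obtain ⟨x, rfl⟩ := e.surjective y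
    simp only [permCongr_apply, symm_apply_apply]
    exact (congrArg c (hq x)).trans (hl x x.2)
  refine ⟨e, fun q => ⟨?_, fun hq => ?_⟩⟩
  · rintro ⟨g, hg, -, -, hq⟩
    obtain ⟨l, hl, h⟩ := hg.2 u
    rw [key q g l hq h]
    exact hl
  · obtain ⟨g, hg, hgu, h⟩ := hL _ hq
    have hN : ∀ w, g w ∈ Γ.neighborSet u ↔ w ∈ Γ.neighborSet u := fun w => by
      rw [mem_neighborSet, mem_neighborSet, ← hg.1 u w, hgu]
    have : g.subtypePerm hN = q := e.permCongr.injective (key _ g _ (fun _ => rfl) h)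
    exact this ▸ ⟨g, hg, hg.1, hgu, fun _ => rfl⟩

end SimpleGraph

/-! ### Locally-`L` pairs -/

section LocallyPair

variable {V W Ω : Type*}

structure IsLocallyPair (L : Subgroup (Perm Ω)) (Λ : SimpleGraph V) (H : Subgroup (Perm V)) :
    Prop where
  adj_iff : ∀ g ∈ H, ∀ p q : V, Λ.Adj (g p) (g q) ↔ Λ.Adj p q
  connected : Λ.Connected
  exists_apply_eq : ∀ u v : V, ∃ h ∈ H, h u = v
  isPermIso : ∀ u : V, IsPermIso (localSet Λ H u) {p | p ∈ L}

theorem IsLocallyPair.relabel {L : Subgroup (Perm Ω)} {Λ : SimpleGraph V}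
    {H : Subgroup (Perm V)} (h : IsLocallyPair L Λ H) (e : V ≃ W) :
    IsLocallyPair L (Λ.comap e.symm) (H.map e.permCongrHom.toMonoidHom) := by
  have hadj : ∀ g ∈ H, ∀ p q : W, Λ.Adj (e.symm (e (g (e.symm p)))) (e.symm (e (g (e.symm q))))
      ↔ Λ.Adj (e.symm p) (e.symm q) := by
    intro g hg p q
    simpa only [symm_apply_apply] using h.adj_iff g hg _ _
  refine ⟨?_, (Iso.comap e.symm Λ).connected_iff.mpr h.connected, fun u v => ?_, fun u' => ?_⟩
  · rintro _ ⟨g, hg, rfl⟩ p q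
    exact hadj g hg p q
  · obtain ⟨g, hg, hgu⟩ := h.exists_apply_eq (e.symm u) (e.symm v)
    exact ⟨_, ⟨g, hg, rfl⟩, by simp [hgu]⟩
  let ν : (Λ.comap e.symm).neighborSet u' ≃ Λ.neighborSet (e.symm u') :=
    { toFun x := ⟨e.symm x, x.2⟩
      invFun y := ⟨e y, by rw [mem_neighborSet, comap_adj, symm_apply_apply]; exact y.2⟩
      left_inv x := by simp
      right_inv y := by simp }
  have hν : ∀ q, q ∈ localSet (Λ.comap e.symm) (H.map e.permCongrHom.toMonoidHom) u' ↔
      ν.permCongr q ∈ localSet Λ H (e.symm u') := by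
    refine fun q => ⟨?_, ?_⟩
    · rintro ⟨_, ⟨g, hg, rfl⟩, -, hgu, hq⟩
      refine ⟨g, hg, h.adj_iff g hg, ?_, fun y => ?_⟩
      · simpa [eq_symm_apply] using hgu
      · simpa [ν] using congrArg e.symm (hq (ν.symm y))
    · rintro ⟨g, hg, -, hgu, hq⟩
      refine ⟨_, ⟨g, hg, rfl⟩, hadj g hg, by simp [hgu], fun x => ?_⟩
      exact e.symm_apply_eq.mp (by simpa [ν] using hq (ν x))
  obtain ⟨e₀, he₀⟩ := h.isPermIso (e.symm u')
  exact ⟨ν.trans e₀, fun q => (hν q).trans (he₀ _)⟩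

theorem card_inf_stabilizer_le_map_permCongr [Finite W] (e : V ≃ W) (H : Subgroup (Perm V))
    (u : V) : Nat.card ↥(H ⊓ stabilizer (Perm V) u) ≤
      Nat.card ↥(H.map e.permCongrHom.toMonoidHom ⊓ stabilizer (Perm W) (e u)) := by
  refine Nat.card_le_card_of_injective (fun g => ⟨e.permCongrHom g, ?_⟩) fun g g' hgg' => ?_
  · obtain ⟨hgH, hgu⟩ := Subgroup.mem_inf.mp g.2
    refine Subgroup.mem_inf.mpr ⟨⟨g, hgH, rfl⟩, ?_⟩
    rw [mem_stabilizer_iff, Perm.smul_def] at hgu ⊢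
    simp [hgu]
  · exact Subtype.ext (e.permCongrHom.injective (congrArg Subtype.val hgg'))

end LocallyPair

/-! ### Block systems -/

/-- The block system of `L` is encoded by the invariant equivalence relation `r`; `sect` witnesses
the transitivity of `L`. -/
structure BlockSystem (Ω : Type*) where
  L : Subgroup (Perm Ω)
  r : Setoid Ω
  map_rel_iff : ∀ l ∈ L, ∀ x y, r (l x) (l y) ↔ r x y
  base : Ω
  sect : Ω → Perm Ω
  sect_mem : ∀ x, sect x ∈ L
  sect_base : ∀ x, sect x base = x

namespace BlockSystem

variable {Ω : Type*} (S : BlockSystem Ω)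

def block : Set Ω := {x | S.r x S.base}

def kernel : Subgroup (Perm Ω) := S.L ⊓ fixingSubgroup (Perm Ω) S.blockᶜ

theorem kernel_apply_of_not_rel {κ : Perm Ω} (hκ : κ ∈ S.kernel) {z : Ω}
    (hz : ¬ S.r z S.base) : κ z = z :=
  (mem_fixingSubgroup_iff (Perm Ω)).mp hκ.2 z hz

theorem rel_kernel_apply {κ : Perm Ω} (hκ : κ ∈ S.kernel) (x : Ω) : S.r (κ x) x := by
  by_cases hx : S.r x S.base
  · have hκx : S.r (κ x) S.base := by
      by_contra h
      exact h (by rwa [κ.injective (S.kernel_apply_of_not_rel hκ h)])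
    exact S.r.trans' hκx (S.r.symm' hx)
  · rw [S.kernel_apply_of_not_rel hκ hx]

theorem rel_sect_apply_iff (x b : Ω) : S.r (S.sect x b) x ↔ S.r b S.base := by
  have h := S.map_rel_iff _ (S.sect_mem x) b S.base
  rwa [S.sect_base] at h

noncomputable def conj (q : Quotient S.r) : S.kernel →* Perm Ω :=
  (MulAut.conj (S.sect q.out)).toMonoidHom.comp S.kernel.subtype

theorem conj_apply (q : Quotient S.r) (κ : S.kernel) (x : Ω) :
    S.conj q κ x = S.sect q.out ((κ : Perm Ω) ((S.sect q.out)⁻¹ x)) := rfl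

theorem conj_mem (q : Quotient S.r) (κ : S.kernel) : S.conj q κ ∈ S.L :=
  S.L.mul_mem (S.L.mul_mem (S.sect_mem _) κ.2.1) (S.L.inv_mem (S.sect_mem _))

theorem rel_conj_apply (q : Quotient S.r) (κ : S.kernel) (x : Ω) : S.r (S.conj q κ x) x := by
  rw [conj_apply]
  conv_rhs => rw [← apply_symm_apply (S.sect q.out) x]
  exact (S.map_rel_iff _ (S.sect_mem _) _ _).mpr (S.rel_kernel_apply κ.2 _)

theorem mk_conj_apply (q : Quotient S.r) (κ : S.kernel) (x : Ω) :
    (⟦S.conj q κ x⟧ : Quotient S.r) = ⟦x⟧ :=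
  Quotient.sound (S.rel_conj_apply q κ x)

theorem conj_apply_of_ne {q : Quotient S.r} (κ : S.kernel) {x : Ω} (hx : ⟦x⟧ ≠ q) :
    S.conj q κ x = x := by
  have hout : ¬ S.r ((S.sect q.out)⁻¹ x) S.base := by
    intro h
    refine hx (Eq.trans ?_ (Quotient.out_eq q))
    refine Quotient.sound (S.r.trans' ?_ ((S.rel_sect_apply_iff q.out _).mpr h))
    rw [Perm.coe_inv, apply_symm_apply]
  rw [conj_apply, S.kernel_apply_of_not_rel κ.2 hout, Perm.coe_inv, apply_symm_apply]

theorem conj_injective (q : Quotient S.r) : Function.Injective (S.conj q) :=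
  fun _ _ h => Subtype.ext ((MulAut.conj _).injective h)

theorem sect_inv_apply_mem_block (x : Ω) : (S.sect (⟦x⟧ : Quotient S.r).out)⁻¹ x ∈ S.block := by
  refine (S.rel_sect_apply_iff (⟦x⟧ : Quotient S.r).out _).mp ?_
  rw [Perm.coe_inv, apply_symm_apply]
  exact S.r.symm' (Quotient.mk_out x)

variable (n : ℕ)

open scoped Classical in
noncomputable def voltage (x y : Ω) (l : S.L) : ZMod n :=
  if S.r ((l : Perm Ω) x) y then 1 else 0

/-- The voltage of the closed walk `(base, 0) - (base, 1) - (x, 0) - (x, 1) - (base, 0)`. -/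
noncomputable def loopVoltage (x : Ω) : S.L → ZMod n :=
  S.voltage n S.base S.base - S.voltage n x S.base + S.voltage n x x - S.voltage n S.base x

variable {n}

theorem voltage_eq_voltage {x y x' y' : Ω} {l l' : S.L}
    (h : S.r ((l : Perm Ω) x) y ↔ S.r ((l' : Perm Ω) x') y') :
    S.voltage n x y l = S.voltage n x' y' l' := by
  unfold voltage
  by_cases h₁ : S.r ((l : Perm Ω) x) y
  · rw [if_pos h₁, if_pos (h.mp h₁)]
  · rw [if_neg h₁, if_neg (mt h.mpr h₁)]

theorem voltage_of_rel {x y : Ω} {l : S.L} (h : S.r ((l : Perm Ω) x) y) :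
    S.voltage n x y l = 1 :=
  if_pos h

theorem voltage_of_not_rel {x y : Ω} {l : S.L} (h : ¬ S.r ((l : Perm Ω) x) y) :
    S.voltage n x y l = 0 :=
  if_neg h

theorem voltage_congr {x x' y y' : Ω} (hx : S.r x x') (hy : S.r y y') :
    S.voltage n x y = S.voltage n x' y' := by
  ext l
  have hlx : S.r ((l : Perm Ω) x) ((l : Perm Ω) x') := (S.map_rel_iff _ l.2 _ _).mpr hx
  exact S.voltage_eq_voltage ⟨fun h => S.r.trans' (S.r.trans' (S.r.symm' hlx) h) hy,
    fun h => S.r.trans' (S.r.trans' hlx h) (S.r.symm' hy)⟩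

theorem voltage_apply_apply (α β l : S.L) (x y : Ω) :
    S.voltage n ((α : Perm Ω) x) ((β : Perm Ω) y) l = S.voltage n x y (β⁻¹ * l * α) := by
  refine S.voltage_eq_voltage ?_
  rw [← S.map_rel_iff _ (S.L.inv_mem β.2)]
  simp [Perm.mul_apply]

theorem voltage_swap (x y : Ω) (l : S.L) : S.voltage n y x l = S.voltage n x y l⁻¹ := by
  refine S.voltage_eq_voltage ?_
  rw [← S.map_rel_iff _ (S.L.inv_mem l.2)]
  simp only [InvMemClass.coe_inv, Perm.coe_inv, symm_apply_apply]
  exact ⟨S.r.symm', S.r.symm'⟩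

theorem loopVoltage_one {x : Ω} (hx : ¬ S.r x S.base) : S.loopVoltage n x 1 = 2 := by
  have hrel : ∀ y z : Ω, S.r y z → S.voltage n y z 1 = 1 := fun y z h =>
    S.voltage_of_rel (by simpa using h)
  have hnot : ∀ y z : Ω, ¬ S.r y z → S.voltage n y z 1 = 0 := fun y z h =>
    S.voltage_of_not_rel (by simpa using h)
  simp only [loopVoltage, Pi.sub_apply, Pi.add_apply, hrel _ _ (S.r.refl' _), hnot _ _ hx,
    hnot _ _ (fun h => hx (S.r.symm' h))]
  norm_num

end BlockSystem

/-! ### The voltage cover -/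

namespace BlockSystem

variable {Ω : Type*} (S : BlockSystem Ω) (n : ℕ)

@[ext]
structure Vertex where
  s : S.L → ZMod n
  pt : Ω
  side : Bool

instance [Finite Ω] [NeZero n] : Finite (S.Vertex n) :=
  Finite.of_injective (fun v : S.Vertex n => (v.s, v.pt, v.side)) fun v w h => by
    cases v; cases w; simp_all

abbrev Fibre := (S.L → ZMod n) × Bool × Quotient S.r

def root : S.Vertex n := ⟨0, S.base, false⟩

variable {S n}

def Edge (v w : S.Vertex n) : Prop :=
  v.side = false ∧ w.side = true ∧ w.s = v.s + S.voltage n v.pt w.pt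

variable (S n) in
def cover : SimpleGraph (S.Vertex n) where
  Adj v w := Edge v w ∨ Edge w v
  symm := ⟨fun _ _ => Or.symm⟩
  loopless := ⟨fun v h => by obtain ⟨h₁, h₂, -⟩ | ⟨h₁, h₂, -⟩ := h <;> simp_all⟩

noncomputable def nbr (v : S.Vertex n) (y : Ω) : S.Vertex n :=
  bif v.side then ⟨v.s - S.voltage n y v.pt, y, false⟩ else ⟨v.s + S.voltage n v.pt y, y, true⟩

def fibre (v : S.Vertex n) : S.Fibre n := (v.s, v.side, ⟦v.pt⟧)

theorem cover_adj_iff {v w : S.Vertex n} : (S.cover n).Adj v w ↔ w = nbr v w.pt := by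
  obtain ⟨s, x, ε⟩ := v
  obtain ⟨t, y, δ⟩ := w
  cases ε <;> cases δ <;> simp [cover, Edge, nbr, eq_sub_iff_add_eq, eq_comm (a := s)]

@[simp] theorem pt_nbr (v : S.Vertex n) (y : Ω) : (nbr v y).pt = y := by
  cases h : v.side <;> simp [nbr, h]

@[simp] theorem side_nbr (v : S.Vertex n) (y : Ω) : (nbr v y).side = !v.side := by
  cases h : v.side <;> simp [nbr, h]

theorem adj_nbr (v : S.Vertex n) (y : Ω) : (S.cover n).Adj v (nbr v y) := by
  rw [cover_adj_iff, pt_nbr]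

theorem side_of_adj {v w : S.Vertex n} (h : (S.cover n).Adj v w) : w.side = !v.side := by
  rw [cover_adj_iff.mp h, side_nbr]

theorem nbr_congr {v v' : S.Vertex n} (hs : v.s = v'.s) (hpt : S.r v.pt v'.pt)
    (hside : v.side = v'.side) (y : Ω) : nbr v y = nbr v' y := by
  cases h : v.side <;> simp [nbr, h, ← hside, hs, S.voltage_congr hpt (S.r.refl' y),
    S.voltage_congr (S.r.refl' y) hpt]

theorem fibre_nbr_eq_of_rel (v : S.Vertex n) {y y' : Ω} (h : S.r y y') :
    fibre (nbr v y) = fibre (nbr v y') := by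
  cases hv : v.side <;> simp [fibre, nbr, hv, Quotient.sound h, S.voltage_congr h (S.r.refl' _),
    S.voltage_congr (S.r.refl' _) h]

/-! ### Automorphisms of the cover -/

variable (S n) in
abbrev coverAut : Subgroup (Perm (S.Vertex n)) := (S.cover n).localAut Vertex.pt S.L

theorem mem_coverAut_of_edge_iff {g : Perm (S.Vertex n)}
    (hE : ∀ v w, Edge (g v) (g w) ↔ Edge v w)
    (hL : ∀ v, ∃ l ∈ S.L, ∀ w, (S.cover n).Adj v w → (g w).pt = l w.pt) : g ∈ S.coverAut n :=
  ⟨fun a b => or_congr (hE a b) (hE b a), hL⟩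

def translate (t : S.L → ZMod n) : Perm (S.Vertex n) where
  toFun v := ⟨v.s + t, v.pt, v.side⟩
  invFun v := ⟨v.s - t, v.pt, v.side⟩
  left_inv v := by simp
  right_inv v := by simp

@[simp] theorem translate_apply (t : S.L → ZMod n) (v : S.Vertex n) :
    translate t v = ⟨v.s + t, v.pt, v.side⟩ := rfl

theorem translate_mem (t : S.L → ZMod n) : translate t ∈ S.coverAut n :=
  mem_coverAut_of_edge_iff
    (fun v w => by simp only [Edge, translate_apply, add_right_comm v.s t, add_left_inj])
    fun _ => ⟨1, S.L.one_mem, fun _ _ => rfl⟩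

def actFun (α β : S.L) (v : S.Vertex n) : S.Vertex n :=
  ⟨fun l => v.s (β⁻¹ * l * α), ((bif v.side then β else α : S.L) : Perm Ω) v.pt, v.side⟩

def act (α β : S.L) : Perm (S.Vertex n) where
  toFun := actFun α β
  invFun := actFun α⁻¹ β⁻¹
  left_inv := by rintro ⟨s, x, ε⟩; cases ε <;> simp [actFun, mul_assoc]
  right_inv := by rintro ⟨s, x, ε⟩; cases ε <;> simp [actFun, mul_assoc]

@[simp] theorem act_apply (α β : S.L) (v : S.Vertex n) : act α β v =
    ⟨fun l => v.s (β⁻¹ * l * α), ((bif v.side then β else α : S.L) : Perm Ω) v.pt, v.side⟩ :=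
  rfl

theorem act_mem (α β : S.L) : act α β ∈ S.coverAut n := by
  have hj : Function.Surjective fun l : S.L => β⁻¹ * l * α := fun m => ⟨β * m * α⁻¹, by group⟩
  refine mem_coverAut_of_edge_iff (fun v w => ?_) fun v => ?_
  · simp only [Edge, act_apply]
    refine and_congr_right fun hv => and_congr_right fun hw => ?_
    have hvol : S.voltage n ((α : Perm Ω) v.pt) ((β : Perm Ω) w.pt) =
        fun l => S.voltage n v.pt w.pt (β⁻¹ * l * α) :=
      funext fun l => S.voltage_apply_apply α β l _ _
    rw [hv, hw, cond_false, cond_true, hvol]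
    exact (hj.injective_comp_right (γ := ZMod n)).eq_iff (a := w.s)
      (b := v.s + S.voltage n v.pt w.pt)
  · refine ⟨bif v.side then α else β, by cases v.side <;> simp, fun w hw => ?_⟩
    rw [act_apply, side_of_adj hw]
    cases v.side <;> rfl

def swapSides : Perm (S.Vertex n) :=
  Function.Involutive.toPerm (fun v => ⟨fun l => -v.s l⁻¹, v.pt, !v.side⟩) fun v => by simp

@[simp] theorem swapSides_apply (v : S.Vertex n) :
    swapSides v = ⟨fun l => -v.s l⁻¹, v.pt, !v.side⟩ := rfl

theorem swapSides_mem : (swapSides : Perm (S.Vertex n)) ∈ S.coverAut n := by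
  have hE : ∀ v w : S.Vertex n, Edge (swapSides v) (swapSides w) ↔ Edge w v := fun v w => by
    simp only [Edge, swapSides_apply, Bool.not_eq_false', Bool.not_eq_true']
    rw [and_left_comm]
    refine and_congr_right fun _ => and_congr_right fun _ => ?_
    simp only [funext_iff, Pi.add_apply, S.voltage_swap w.pt v.pt]
    refine ⟨fun h m => ?_, fun h l => ?_⟩
    · have := h m⁻¹
      rw [inv_inv] at this
      linear_combination this
    · linear_combination h l⁻¹
  exact ⟨fun a b => (or_congr (hE a b) (hE b a)).trans or_comm,
    fun _ => ⟨1, S.L.one_mem, fun _ _ => rfl⟩⟩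

theorem exists_mem_coverAut_apply_eq_root (v : S.Vertex n) :
    ∃ g ∈ S.coverAut n, g v = S.root n := by
  obtain ⟨g₁, hg₁, hside⟩ : ∃ g ∈ S.coverAut n, (g v).side = false := by
    cases h : v.side
    · exact ⟨1, one_mem _, h⟩
    · exact ⟨swapSides, swapSides_mem, by simp [h]⟩
  let σ : S.L := ⟨S.sect (g₁ v).pt, S.sect_mem _⟩
  let g₂ : Perm (S.Vertex n) := act σ⁻¹ 1
  refine ⟨translate (-(g₂ (g₁ v)).s) * g₂ * g₁,
    mul_mem (mul_mem (translate_mem _) (act_mem _ _)) hg₁, ?_⟩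
  have hσ : (σ : Perm Ω)⁻¹ (g₁ v).pt = S.base := by
    rw [Perm.inv_eq_iff_eq]
    exact (S.sect_base _).symm
  simp [g₂, hside, root, hσ]

theorem exists_mem_coverAut_fix (u : S.Vertex n) {l : Perm Ω} (hl : l ∈ S.L) :
    ∃ g ∈ S.coverAut n, g u = u ∧ ∀ w, (S.cover n).Adj u w → (g w).pt = l w.pt := by
  let l' : S.L := ⟨l, hl⟩
  let g₀ : Perm (S.Vertex n) := act (bif u.side then l' else 1) (bif u.side then 1 else l')
  refine ⟨translate (u.s - (g₀ u).s) * g₀, mul_mem (translate_mem _) (act_mem _ _), ?_, ?_⟩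
  · cases h : u.side <;> ext <;> simp [g₀, h]
  · intro w hw
    cases h : u.side <;> simp [g₀, h, side_of_adj hw, l']

noncomputable def fibreSmul (f : S.Fibre n → S.kernel) (v : S.Vertex n) : S.Vertex n :=
  ⟨v.s, S.conj ⟦v.pt⟧ (f (fibre v)) v.pt, v.side⟩

theorem fibre_fibreSmul (f : S.Fibre n → S.kernel) (v : S.Vertex n) :
    fibre (fibreSmul f v) = fibre v := by
  simp [fibreSmul, fibre, mk_conj_apply]

noncomputable instance : MulAction (S.Fibre n → S.kernel) (S.Vertex n) where
  smul := fibreSmul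
  one_smul v := by simp only [HSMul.hSMul, fibreSmul, Pi.one_apply, map_one, Perm.one_apply]
  mul_smul f f' v := by
    change fibreSmul (f * f') v = fibreSmul f (fibreSmul f' v)
    conv_rhs => rw [fibreSmul, fibre_fibreSmul]
    simp only [fibreSmul, mk_conj_apply, Pi.mul_apply, map_mul, Perm.mul_apply]

theorem smul_def (f : S.Fibre n → S.kernel) (v : S.Vertex n) :
    f • v = ⟨v.s, S.conj ⟦v.pt⟧ (f (fibre v)) v.pt, v.side⟩ := rfl

theorem eq_of_smul_eq {f f' : S.Fibre n → S.kernel} (v : S.Vertex n)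
    (h : ∀ x, S.r x v.pt → f • (⟨v.s, x, v.side⟩ : S.Vertex n) = f' • ⟨v.s, x, v.side⟩) :
    f (fibre v) = f' (fibre v) := by
  refine S.conj_injective ⟦v.pt⟧ (Equiv.ext fun x => ?_)
  by_cases hx : (⟦x⟧ : Quotient S.r) = ⟦v.pt⟧
  · simpa [smul_def, fibre, hx] using congrArg Vertex.pt (h x (Quotient.exact hx))
  · rw [S.conj_apply_of_ne _ hx, S.conj_apply_of_ne _ hx]

/-- The neighbours of `v` in the fibre `p` form one block, on which `κ` acts through
`S.conj`; all other neighbours are fixed. -/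
theorem toPerm_mulSingle_mem [DecidableEq (S.Fibre n)] (p : S.Fibre n) (κ : S.kernel) :
    MulAction.toPerm (Pi.mulSingle p κ : S.Fibre n → S.kernel) ∈ S.coverAut n := by
  refine mem_coverAut_of_edge_iff (fun v w => ?_) fun v => ?_
  · simp only [MulAction.toPerm_apply, Edge, smul_def]
    rw [S.voltage_congr (S.rel_conj_apply _ _ _) (S.rel_conj_apply _ _ _)]
  by_cases hp : ∃ y, fibre (nbr v y) = p
  · obtain ⟨y, rfl⟩ := hp
    refine ⟨S.conj ⟦y⟧ κ, S.conj_mem _ _, fun w hw => ?_⟩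
    rw [cover_adj_iff] at hw
    rw [MulAction.toPerm_apply, smul_def]
    by_cases hwy : S.r w.pt y
    · rw [hw, fibre_nbr_eq_of_rel v hwy, Pi.mulSingle_eq_same, ← hw, Quotient.sound hwy]
    · have hne : fibre w ≠ fibre (nbr v y) := fun h => hwy (Quotient.exact (by
        simpa [fibre] using congrArg (fun p => p.2.2) h))
      rw [Pi.mulSingle_eq_of_ne hne, map_one, Perm.one_apply,
        S.conj_apply_of_ne _ fun h => hwy (Quotient.exact h)]
  · refine ⟨1, S.L.one_mem, fun w hw => ?_⟩
    rw [cover_adj_iff] at hw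
    have hne : fibre w ≠ p := fun h => hp ⟨w.pt, hw ▸ h⟩
    rw [MulAction.toPerm_apply, smul_def, Pi.mulSingle_eq_of_ne hne, map_one]

theorem toPerm_mem [Finite Ω] [NeZero n] (f : S.Fibre n → S.kernel) :
    MulAction.toPerm f ∈ S.coverAut n := by
  classical
  have : Fintype (S.Fibre n) := Fintype.ofFinite _
  suffices f ∈ (S.coverAut n).comap (MulAction.toPermHom _ _) from this
  rw [← Finset.noncommProd_mulSingle f]
  exact Subgroup.noncommProd_mem _ _ fun p _ => toPerm_mulSingle_mem p (f p)

end BlockSystem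

/-! ### The component of the root -/

namespace BlockSystem

variable {Ω : Type*} (S : BlockSystem Ω) (n : ℕ)

abbrev component : (S.cover n).ConnectedComponent := (S.cover n).connectedComponentMk (S.root n)

abbrev componentAut : Subgroup (Perm (S.component n)) :=
  (S.component n).toSimpleGraph.localAut (Vertex.pt ∘ Subtype.val) S.L

variable {S n}

theorem exists_mem_componentAut_apply_eq_root (u : S.component n) :
    ∃ h ∈ S.componentAut n, h u = ⟨S.root n, rfl⟩ := by
  obtain ⟨g, hg, hgu⟩ := exists_mem_coverAut_apply_eq_root (u : S.Vertex n)
  obtain ⟨h, hh, hhg⟩ := (S.component n).exists_mem_localAut_restrict hg u.2 (by rw [hgu]; rfl)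
  exact ⟨h, hh, Subtype.ext ((hhg u).trans hgu)⟩

theorem bijective_pt_neighborSet (u : S.component n) :
    Function.Bijective
      (((S.component n).toSimpleGraph.neighborSet u).domRestrict (Vertex.pt ∘ Subtype.val)) := by
  refine ⟨fun x x' hxx' => ?_, fun y => ?_⟩
  · have hpt : (x : S.Vertex n).pt = (x' : S.Vertex n).pt := hxx'
    exact Subtype.ext (Subtype.ext ((cover_adj_iff.mp x.2).trans
      (hpt ▸ (cover_adj_iff.mp x'.2).symm)))
  · exact ⟨⟨⟨nbr u y, (S.component n).mem_supp_of_adj_mem_supp u.2 (adj_nbr _ y)⟩,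
      adj_nbr _ y⟩, pt_nbr _ y⟩

theorem isLocallyPair_component :
    IsLocallyPair S.L (S.component n).toSimpleGraph (S.componentAut n) where
  adj_iff _ hg := hg.1
  connected := ConnectedComponent.connected_toSimpleGraph _
  exists_apply_eq u v := by
    obtain ⟨g, hg, hgu⟩ := exists_mem_componentAut_apply_eq_root u
    obtain ⟨g', hg', hgv⟩ := exists_mem_componentAut_apply_eq_root v
    refine ⟨g'⁻¹ * g, mul_mem (inv_mem hg') hg, ?_⟩
    rw [Perm.mul_apply, hgu, ← hgv, Perm.coe_inv, symm_apply_apply]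
  isPermIso u := by
    refine isPermIso_localSet_localAut (bijective_pt_neighborSet u) fun l hl => ?_
    obtain ⟨g, hg, hgu, hgl⟩ := exists_mem_coverAut_fix (u : S.Vertex n) hl
    obtain ⟨h, hh, hhg⟩ := (S.component n).exists_mem_localAut_restrict hg u.2 (by
      rw [hgu]; exact u.2)
    exact ⟨h, hh, Subtype.ext ((hhg u).trans hgu), fun w hw => by simp [hhg, hgl w hw]⟩

theorem mk_add_loopVoltage_mem {t : S.L → ZMod n} (x : Ω)
    (ht : (⟨t, S.base, false⟩ : S.Vertex n) ∈ S.component n) :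
    (⟨t + S.loopVoltage n x, S.base, false⟩ : S.Vertex n) ∈ S.component n := by
  have step : ∀ v ∈ S.component n, ∀ y, nbr v y ∈ S.component n := fun v hv y =>
    (S.component n).mem_supp_of_adj_mem_supp hv (adj_nbr v y)
  convert step _ (step _ (step _ (step _ ht S.base) x) x) S.base using 1
  simp only [nbr, loopVoltage, cond_false, cond_true, Vertex.mk.injEq, and_true]
  abel

theorem mk_nsmul_loopVoltage_mem (x : Ω) (m : ℕ) :
    (⟨m • S.loopVoltage n x, S.base, false⟩ : S.Vertex n) ∈ S.component n := by
  induction m with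
  | zero => rw [zero_smul]; rfl
  | succ m ih => rw [succ_nsmul]; exact mk_add_loopVoltage_mem x ih

theorem le_card_component [Finite Ω] [NeZero n] (hn : Odd n) {x : Ω} (hx : ¬ S.r x S.base) :
    n ≤ Nat.card (S.component n) := by
  have h2 : IsUnit (2 : ZMod n) := by
    exact_mod_cast (ZMod.isUnit_iff_coprime 2 n).mpr (Nat.coprime_two_left.mpr hn)
  let F : ZMod n → S.component n := fun a =>
    ⟨⟨a.val • S.loopVoltage n x, S.base, false⟩, mk_nsmul_loopVoltage_mem x a.val⟩
  have hF : Function.Injective F := by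
    intro a b hab
    have := congrFun (congrArg (fun v : S.component n => (v : S.Vertex n).s) hab) 1
    simp only [F, Pi.smul_apply, S.loopVoltage_one hx, nsmul_eq_mul, ZMod.natCast_zmod_val] at this
    exact h2.mul_left_inj.mp this
  simpa using Nat.card_le_card_of_injective F hF

theorem mk_mem_component_of_rel {v : S.Vertex n} (hv : v ∈ S.component n) {x : Ω}
    (hx : S.r x v.pt) : (⟨v.s, x, v.side⟩ : S.Vertex n) ∈ S.component n := by
  have h := (S.component n).mem_supp_of_adj_mem_supp hv (adj_nbr v S.base)
  rw [nbr_congr (v := v) (v' := ⟨v.s, x, v.side⟩) rfl (S.r.symm' hx) rfl] at h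
  exact ((S.component n).mem_supp_congr_adj (adj_nbr _ S.base)).mpr h

variable (S n) in
noncomputable def componentEquiv :
    S.component n ≃ Set.range (fun v : S.component n => fibre (v : S.Vertex n)) × S.block where
  toFun v := (⟨_, v, rfl⟩, ⟨_, S.sect_inv_apply_mem_block (v : S.Vertex n).pt⟩)
  invFun pb := ⟨⟨pb.1.1.1, S.sect pb.1.1.2.2.out pb.2, pb.1.1.2.1⟩, by
    obtain ⟨⟨_, v, rfl⟩, b, hb⟩ := pb
    exact mk_mem_component_of_rel v.2
      (S.r.trans' ((S.rel_sect_apply_iff _ _).mpr hb) (Quotient.mk_out _))⟩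
  left_inv v := by ext <;> simp [fibre]
  right_inv := by
    rintro ⟨⟨_, v, rfl⟩, b, hb⟩
    have hq : (⟦S.sect (⟦(v : S.Vertex n).pt⟧ : Quotient S.r).out b⟧ : Quotient S.r) =
        ⟦(v : S.Vertex n).pt⟧ :=
      (Quotient.sound ((S.rel_sect_apply_iff _ _).mpr hb)).trans (Quotient.out_eq _)
    ext <;> simp [fibre, hq]

theorem card_component [Finite Ω] [NeZero n] :
    Nat.card (S.component n) =
      Nat.card (Set.range fun v : S.component n => fibre (v : S.Vertex n)) * S.block.ncard := by
  rw [Nat.card_congr (componentEquiv S n), Nat.card_prod, Nat.card_coe_set_eq S.block]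

theorem pow_le_card_stabilizer [Finite Ω] [NeZero n] (u : S.component n) :
    Nat.card S.kernel ^ (Nat.card (Set.range fun v : S.component n => fibre (v : S.Vertex n)) - 1)
      ≤ Nat.card ↥(S.componentAut n ⊓ stabilizer (Perm (S.component n)) u) := by
  classical
  set π := fun v : S.component n => fibre (v : S.Vertex n)
  set D := Set.range π \ {π u}
  have hD : Nat.card D = Nat.card (Set.range π) - 1 := by
    rw [Nat.card_coe_set_eq, Nat.card_coe_set_eq,
      Set.ncard_sdiff_singleton_of_mem (Set.mem_range_self u)]
  let extend (F : D → S.kernel) (p : S.Fibre n) : S.kernel := if h : p ∈ D then F ⟨p, h⟩ else 1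
  have hfix : ∀ F, extend F • (u : S.Vertex n) = u := fun F => by
    have h1 : extend F (fibre (u : S.Vertex n)) = 1 := dif_neg fun h => h.2 rfl
    rw [smul_def, h1, map_one]
    rfl
  have hC : ∀ F w, MulAction.toPerm (extend F) w ∈ S.component n ↔ w ∈ S.component n :=
    fun F => (S.component n).apply_mem_iff (toPerm_mem _).1 u.2 (by
      rw [MulAction.toPerm_apply, hfix]; exact u.2)
  let Φ (F : D → S.kernel) : ↥(S.componentAut n ⊓ stabilizer (Perm (S.component n)) u) :=
    ⟨(MulAction.toPerm (extend F)).subtypePerm (hC F),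
      (S.component n).subtypePerm_mem_localAut (toPerm_mem _) _, Subtype.ext (hfix F)⟩
  have hΦ : Function.Injective Φ := by
    intro F F' h
    funext ⟨p, hp⟩
    obtain ⟨v, rfl⟩ := hp.1
    have := eq_of_smul_eq (f := extend F) (f' := extend F') (v : S.Vertex n) fun x hx =>
      congrArg Subtype.val (Equiv.ext_iff.mp (congrArg Subtype.val h)
        ⟨_, mk_mem_component_of_rel v.2 hx⟩)
    simpa only [extend, π, dif_pos hp] using this
  calc Nat.card S.kernel ^ (Nat.card (Set.range π) - 1) = Nat.card (D → S.kernel) := by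
        rw [Nat.card_fun, hD]
    _ ≤ _ := Nat.card_le_card_of_injective Φ hΦ

end BlockSystem

universe u

theorem BlockSystem.exists_isLocallyPair {Ω : Type u} [Finite Ω] (S : BlockSystem Ω) {x : Ω}
    (hx : ¬ S.r x S.base) (C : ℕ) :
    ∃ (V : Type u) (_ : Finite V) (Λ : SimpleGraph V) (H : Subgroup (Perm V)),
      IsLocallyPair S.L Λ H ∧ C < Nat.card V ∧
      ∀ u : V, Nat.card S.kernel ^ (Nat.card V / S.block.ncard - 1) ≤
        Nat.card ↥(H ⊓ stabilizer (Perm V) u) := by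
  refine ⟨S.component (2 * C + 1), inferInstance, _, _, isLocallyPair_component,
    (le_card_component (odd_two_mul_add_one C) hx).trans_lt' (by omega), fun u => ?_⟩
  have hk : 0 < S.block.ncard := (Set.ncard_pos (Set.toFinite _)).mpr ⟨S.base, S.r.refl' _⟩
  rw [card_component, Nat.mul_div_cancel _ hk]
  exact pow_le_card_stabilizer u

/-! ### The block system of a block -/

section Blocks

variable {Ω : Type*} {L : Subgroup (Perm Ω)} {B : Set Ω}

theorem image_eq_image_of_isBlock
    (hB : ∀ g ∈ L, (g : Perm Ω) '' B = B ∨ Disjoint ((g : Perm Ω) '' B) B)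
    {a b : Perm Ω} (ha : a ∈ L) (hb : b ∈ L) (h : (a '' B ∩ b '' B).Nonempty) :
    a '' B = b '' B := by
  obtain ⟨_, ⟨x, hx, rfl⟩, z, hz, hzx⟩ := h
  rcases hB (b⁻¹ * a) (L.mul_mem (L.inv_mem hb) ha) with heq | hdisj
  · calc a '' B = (b * (b⁻¹ * a)) '' B := by rw [mul_inv_cancel_left]
      _ = b '' ((b⁻¹ * a) '' B) := by rw [Perm.coe_mul, Set.image_comp]
      _ = b '' B := by rw [heq]
  · refine absurd hdisj (Set.not_disjoint_iff.mpr ⟨z, ⟨x, hx, ?_⟩, hz⟩)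
    rw [Perm.mul_apply, ← hzx, Perm.coe_inv, symm_apply_apply]

variable (L B) (hB : ∀ g ∈ L, (g : Perm Ω) '' B = B ∨ Disjoint ((g : Perm Ω) '' B) B)
  (htrans : ∀ a b : Ω, ∃ l ∈ L, l a = b)

def blockSetoid (hne : B.Nonempty) : Setoid Ω where
  r x y := ∃ l ∈ L, x ∈ (l : Perm Ω) '' B ∧ y ∈ (l : Perm Ω) '' B
  iseqv.refl x := by
    obtain ⟨b, hb⟩ := hne
    obtain ⟨l, hl, rfl⟩ := htrans b x
    exact ⟨l, hl, ⟨b, hb, rfl⟩, ⟨b, hb, rfl⟩⟩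
  iseqv.symm := fun ⟨l, hl, hx, hy⟩ => ⟨l, hl, hy, hx⟩
  iseqv.trans := fun ⟨l, hl, hx, hy⟩ ⟨l', hl', hy', hz⟩ =>
    ⟨l, hl, hx, image_eq_image_of_isBlock hB hl' hl ⟨_, hy', hy⟩ ▸ hz⟩

theorem blockSetoid_map_rel_iff (hne : B.Nonempty) {l : Perm Ω} (hl : l ∈ L) (x y : Ω) :
    blockSetoid L B hB htrans hne (l x) (l y) ↔ blockSetoid L B hB htrans hne x y := by
  have key : ∀ g ∈ L, ∀ x y, blockSetoid L B hB htrans hne x y →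
      blockSetoid L B hB htrans hne (g x) (g y) := by
    rintro g hg x y ⟨m, hm, hx, hy⟩
    refine ⟨g * m, L.mul_mem hg hm, ?_, ?_⟩ <;> rw [Perm.coe_mul, Set.image_comp] <;>
      exact Set.mem_image_of_mem _ ‹_›
  refine ⟨fun h => ?_, key l hl x y⟩
  simpa using key l⁻¹ (L.inv_mem hl) _ _ h

theorem blockSetoid_rel_iff_mem {b : Ω} (hb : b ∈ B) (x : Ω) :
    blockSetoid L B hB htrans ⟨b, hb⟩ x b ↔ x ∈ B := by
  refine ⟨fun ⟨l, hl, hx, hbl⟩ => ?_, fun hx => ⟨1, L.one_mem, by simpa, by simpa⟩⟩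
  rw [image_eq_image_of_isBlock hB hl L.one_mem ⟨b, hbl, by simpa⟩] at hx
  simpa using hx

noncomputable def BlockSystem.ofBlock {b : Ω} (hb : b ∈ B) : BlockSystem Ω where
  L := L
  r := blockSetoid L B hB htrans ⟨b, hb⟩
  map_rel_iff _ hl := blockSetoid_map_rel_iff L B hB htrans _ hl
  base := b
  sect x := (htrans b x).choose
  sect_mem x := (htrans b x).choose_spec.1
  sect_base x := (htrans b x).choose_spec.2

theorem BlockSystem.block_ofBlock {b : Ω} (hb : b ∈ B) :
    (BlockSystem.ofBlock L B hB htrans hb).block = B :=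
  Set.ext (blockSetoid_rel_iff_mem L B hB htrans hb)

end Blocks

theorem stmt16_general (Ω : Type*) [Fintype Ω] (L : Subgroup (Equiv.Perm Ω))
    (hLtrans : ∀ a b : Ω, ∃ l ∈ L, l a = b)
    (B : Set Ω)
    (hblock : ∀ g ∈ L, (g : Equiv.Perm Ω) '' B = B ∨ Disjoint ((g : Equiv.Perm Ω) '' B) B)
    (hB1 : 1 < B.ncard) (hB2 : B ≠ Set.univ) :
    ∀ C : ℕ, ∃ (V : Type) (_ : Fintype V) (Λ : SimpleGraph V)
        (H : Subgroup (Equiv.Perm V)),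
      (∀ g ∈ H, ∀ p q : V, Λ.Adj (g p) (g q) ↔ Λ.Adj p q) ∧
      Λ.Connected ∧
      (∀ u v : V, ∃ h ∈ H, h u = v) ∧
      (∀ u : V, IsPermIso (localSet Λ H u) {p : Equiv.Perm Ω | p ∈ L}) ∧
      C < Fintype.card V ∧
      (∀ u : V,
        Nat.card ↥(L ⊓ fixingSubgroup (Equiv.Perm Ω) Bᶜ) ^ (Fintype.card V / B.ncard - 1) ≤
          Nat.card ↥(H ⊓ MulAction.stabilizer (Equiv.Perm V) u)) := by
  intro C
  obtain ⟨b, hb⟩ : B.Nonempty := Set.nonempty_of_ncard_ne_zero (by omega)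
  obtain ⟨x, hx⟩ : ∃ x, x ∉ B := by
    by_contra! h
    exact hB2 (Set.eq_univ_of_forall h)
  let S := BlockSystem.ofBlock L B hblock hLtrans hb
  have hS : S.block = B := BlockSystem.block_ofBlock L B hblock hLtrans hb
  obtain ⟨V, _, Λ, H, hΛ, hcard, hstab⟩ := S.exists_isLocallyPair (x := x) (by
    change x ∉ S.block
    rwa [hS]) C
  let e := Finite.equivFin V
  obtain ⟨hadj, hconn, htransitive, hlocal⟩ := hΛ.relabel e
  refine ⟨_, inferInstance, _, _, hadj, hconn, htransitive, hlocal, by simpa using hcard,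
    fun u => ?_⟩
  rw [Fintype.card_fin, ← hS, ← e.apply_symm_apply u]
  exact (hstab _).trans (card_inf_stabilizer_le_map_permCongr e H _)

/-- Let `L` be a transitive permutation group on a finite set `Ω` with a nontrivial block
`B` of size `k` such that the pointwise stabiliser `L_{(Ω∖B)}` is nontrivial.  Then for
every constant `C` there is a finite connected graph `Λ` with a vertex-transitive group
of automorphisms `H ≤ Aut(Λ)` whose local action at every vertex is permutation
isomorphic to `L`, with `|VΛ| > C` and `|H_u| ≥ |L_{(Ω∖B)}|^{|VΛ|/k − 1}` for every
vertex `u`. -/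
theorem stmt16 (Ω : Type*) [Fintype Ω] (L : Subgroup (Equiv.Perm Ω))
    (hLtrans : ∀ a b : Ω, ∃ l ∈ L, l a = b)
    (B : Set Ω)
    (hblock : ∀ g ∈ L, (g : Equiv.Perm Ω) '' B = B ∨ Disjoint ((g : Equiv.Perm Ω) '' B) B)
    (hB1 : 1 < B.ncard) (hB2 : B ≠ Set.univ)
    (hstab : L ⊓ fixingSubgroup (Equiv.Perm Ω) Bᶜ ≠ ⊥) :
    ∀ C : ℕ, ∃ (V : Type) (_ : Fintype V) (Λ : SimpleGraph V)
        (H : Subgroup (Equiv.Perm V)),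
      (∀ g ∈ H, ∀ p q : V, Λ.Adj (g p) (g q) ↔ Λ.Adj p q) ∧
      Λ.Connected ∧
      (∀ u v : V, ∃ h ∈ H, h u = v) ∧
      (∀ u : V, IsPermIso (localSet Λ H u) {p : Equiv.Perm Ω | p ∈ L}) ∧
      C < Fintype.card V ∧
      (∀ u : V,
        Nat.card ↥(L ⊓ fixingSubgroup (Equiv.Perm Ω) Bᶜ) ^ (Fintype.card V / B.ncard - 1) ≤
          Nat.card ↥(H ⊓ MulAction.stabilizer (Equiv.Perm V) u)) :=
  stmt16_general Ω L hLtrans B hblock hB1 hB2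
end
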